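/- arXiv:1403.3565 — 6 statements merged into one kernel-verified Lean document; each statement's English description precedes it below -/
import Mathlib

section
/- Let G = (V,E) be a finite simple graph with minimum degree at least 1 and let k ≥ 4. Let G' be the incidence graph of G with threshold function thr' given by thr'(v) = deg_G(v) for every v ∈ V and thr'(e) = 2 for every e ∈ E. Then G contains a clique of size k if and only if there exists a set S ⊆ V ∪ E with |S| ≤ k such that |act¹(S) ∩ E| ≥ k(k−1)/2. -/
/-!
In one round, an edge-vertex of the incidence graph becomes active exactly when it is seeded or
both of its endpoints are seeded. Hence a seed set with `a` vertices and `b` edges activates at most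
`b + C(a,2)` edges. Under `a + b ≤ k` and `k ≥ 4` this reaches `C(k,2)` only if `a = k`, `b = 0`
and every pair of seeded vertices is an edge, i.e. the seeded vertices form a `k`-clique.
Conversely, seeding the vertices of a `k`-clique activates its `C(k,2)` edges.
-/

/-- One round of the activation process: a vertex becomes active if at least `thr v`
of its neighbors are active. -/
def actStep {V : Type*} (G : SimpleGraph V) (thr : V → ℕ) (S : Set V) : Set V :=
  S ∪ {v | thr v ≤ (G.neighborSet v ∩ S).ncard}

/-- `actIter G thr i S` is the set of vertices active after `i` rounds starting from `S`. -/
def actIter {V : Type*} (G : SimpleGraph V) (thr : V → ℕ) : ℕ → Set V → Set V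
  | 0, S => S
  | i + 1, S => actStep G thr (actIter G thr i S)

/-- The set of vertices eventually activated by `S`. -/
def act {V : Type*} (G : SimpleGraph V) (thr : V → ℕ) (S : Set V) : Set V :=
  ⋃ i, actIter G thr i S

/-- `S` is a target set if it eventually activates every vertex. -/
def IsTargetSet {V : Type*} (G : SimpleGraph V) (thr : V → ℕ) (S : Set V) : Prop :=
  act G thr S = Set.univ

/-- The incidence graph of `G`: bipartite graph on `V ⊕ E` where a vertex `v` is adjacent to
an edge `e` iff `v` is an endpoint of `e`. -/
def incidenceGraph {V : Type*} (G : SimpleGraph V) : SimpleGraph (V ⊕ G.edgeSet) :=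
  SimpleGraph.fromRel fun x y =>
    ∃ (v : V) (e : G.edgeSet), x = Sum.inl v ∧ y = Sum.inr e ∧ v ∈ (e : Sym2 V)

-- If `a < k`, then `C(k,2) - C(a,2) = (k - a)(k + a - 1)/2 > k - a ≥ b`, as `k ≥ 4`.
theorem Nat.eq_and_eq_zero_of_choose_two_le_add_choose_two {k a b : ℕ} (hk : 4 ≤ k)
    (hab : a + b ≤ k) (h : k.choose 2 ≤ b + a.choose 2) : a = k ∧ b = 0 := by
  have two_mul_choose_two (m : ℕ) : 2 * m.choose 2 = m * (m - 1) := by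
    rw [Nat.choose_two_right, Nat.mul_div_cancel' (Nat.even_mul_pred_self m).two_dvd]
  suffices a = k by omega
  by_contra hak
  have ha := two_mul_choose_two a
  have hk2 := two_mul_choose_two k
  obtain ⟨c, rfl⟩ : ∃ c, k = a + c + 1 := ⟨k - a - 1, by omega⟩
  rw [Nat.add_sub_cancel] at hk2
  rcases a with _ | a
  · nlinarith
  · rw [Nat.add_sub_cancel] at ha
    nlinarith

theorem Set.ncard_preimage_inl_add_ncard_preimage_inr {α β : Type*} {S : Set (α ⊕ β)}
    (hS : S.Finite) : (Sum.inl ⁻¹' S).ncard + (Sum.inr ⁻¹' S).ncard = S.ncard := by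
  rw [← ncard_image_of_injective (Sum.inl ⁻¹' S) Sum.inl_injective,
    ← ncard_image_of_injective (Sum.inr ⁻¹' S) Sum.inr_injective, image_preimage_eq_inter_range,
    image_preimage_eq_inter_range, ← ncard_union_eq _ (hS.inter_of_left _) (hS.inter_of_left _),
    ← inter_union_distrib_left, range_inl_union_range_inr, inter_univ]
  exact isCompl_range_inl_range_inr.disjoint.mono inter_subset_right inter_subset_right

theorem Set.ncard_le_ncard_inter_iff {α : Type*} {s t : Set α} (hs : s.Finite) :
    s.ncard ≤ (s ∩ t).ncard ↔ s ⊆ t := by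
  rw [← inter_eq_left]
  exact ⟨fun h => eq_of_subset_of_ncard_le inter_subset_left h hs, fun h => by rw [h]⟩

def Set.pairs {α : Type*} (W : Set α) : Set (Sym2 α) :=
  {z | ¬z.IsDiag ∧ ∀ x ∈ z, x ∈ W}

theorem Set.pairs_eq_image {α : Type*} (W : Set α) :
    W.pairs = Sym2.map Subtype.val '' (Sym2.diagSet : Set (Sym2 W))ᶜ := by
  ext z
  induction z using Sym2.ind with
  | _ u v =>
    constructor
    · rintro ⟨huv, hW⟩
      refine ⟨s(⟨u, hW u (by simp)⟩, ⟨v, hW v (by simp)⟩), ?_, rfl⟩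
      simpa using huv
    · rintro ⟨w, hw, hwz⟩
      rw [← hwz]
      exact ⟨fun h => hw ((Sym2.isDiag_map Subtype.val_injective).mp h),
        fun x hx => by obtain ⟨y, -, rfl⟩ := Sym2.mem_map.mp hx; exact y.2⟩

theorem Set.pairs_finite {α : Type*} {W : Set α} (hW : W.Finite) : W.pairs.Finite := by
  have := hW.to_subtype
  rw [pairs_eq_image]
  exact (Set.toFinite _).image _

theorem Set.ncard_pairs {α : Type*} (W : Set α) : W.pairs.ncard = W.ncard.choose 2 := by
  rw [pairs_eq_image, ncard_image_of_injective _ (Sym2.map.injective Subtype.val_injective),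
    Sym2.ncard_diagSet_compl, Nat.card_coe_set_eq]

namespace SimpleGraph

variable {V : Type*} (G : SimpleGraph V)

theorem ncard_setOf_mem_edge (e : G.edgeSet) : {v | v ∈ (e : Sym2 V)}.ncard = 2 := by
  obtain ⟨z, hz⟩ := e
  induction z using Sym2.ind with
  | _ u v =>
    have huv : u ≠ v := G.ne_of_adj hz
    rw [show {x | x ∈ s(u, v)} = {u, v} by ext; simp]
    exact Set.ncard_pair huv

def edgesIn (W : Set V) : Set G.edgeSet :=
  {e | ∀ v ∈ (e : Sym2 V), v ∈ W}

theorem ncard_edgesIn (W : Set V) : (G.edgesIn W).ncard = (G.edgeSet ∩ W.pairs).ncard := by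
  rw [← Set.ncard_image_of_injective _ Subtype.val_injective]
  congr 1
  ext z
  constructor
  · rintro ⟨e, he, rfl⟩
    exact ⟨e.2, G.not_isDiag_of_mem_edgeSet e.2, he⟩
  · rintro ⟨hz, -, hW⟩
    exact ⟨⟨z, hz⟩, hW, rfl⟩

theorem isClique_iff_pairs_subset_edgeSet {W : Set V} : G.IsClique W ↔ W.pairs ⊆ G.edgeSet := by
  constructor
  · rintro hW z ⟨hz, hzW⟩
    induction z using Sym2.ind with
    | _ u v => exact hW (hzW u (by simp)) (hzW v (by simp)) (by simpa using hz)
  · intro h u hu v hv huv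
    refine G.mem_edgeSet.mp (h ⟨Sym2.mk_isDiag_iff.not.mpr huv, fun x hx => ?_⟩)
    rcases Sym2.mem_iff.mp hx with rfl | rfl <;> assumption

variable {G} {W : Set V}

theorem ncard_edgesIn_le (hW : W.Finite) : (G.edgesIn W).ncard ≤ W.ncard.choose 2 := by
  rw [ncard_edgesIn, ← W.ncard_pairs]
  exact Set.ncard_le_ncard Set.inter_subset_right (W.pairs_finite hW)

theorem ncard_edgesIn_of_isClique (h : G.IsClique W) : (G.edgesIn W).ncard = W.ncard.choose 2 := by
  rw [ncard_edgesIn, Set.inter_eq_right.mpr (G.isClique_iff_pairs_subset_edgeSet.mp h),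
    W.ncard_pairs]

theorem isClique_of_choose_two_le_ncard_edgesIn (hW : W.Finite)
    (h : W.ncard.choose 2 ≤ (G.edgesIn W).ncard) : G.IsClique W := by
  rw [ncard_edgesIn, ← W.ncard_pairs] at h
  rw [isClique_iff_pairs_subset_edgeSet, ← Set.inter_eq_right]
  exact Set.eq_of_subset_of_ncard_le Set.inter_subset_right h (W.pairs_finite hW)

end SimpleGraph

section IncidenceGraph

variable {V : Type*} {G : SimpleGraph V}

theorem incidenceGraph_neighborSet_inr (e : G.edgeSet) :
    (incidenceGraph G).neighborSet (Sum.inr e) = Sum.inl '' {v | v ∈ (e : Sym2 V)} := by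
  ext x
  simp only [SimpleGraph.mem_neighborSet, incidenceGraph, SimpleGraph.fromRel_adj]
  constructor
  · rintro ⟨-, ⟨v, e', he, -, -⟩ | ⟨v, e', rfl, he, hv⟩⟩
    · exact (Sum.inr_ne_inl he).elim
    · obtain rfl := Sum.inr_injective he
      exact ⟨v, hv, rfl⟩
  · rintro ⟨v, hv, rfl⟩
    exact ⟨Sum.inr_ne_inl, Or.inr ⟨v, e, rfl, rfl, hv⟩⟩

theorem preimage_inr_actIter_one {thr : V ⊕ G.edgeSet → ℕ} (hthr : ∀ e, thr (Sum.inr e) = 2)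
    (S : Set (V ⊕ G.edgeSet)) :
    Sum.inr ⁻¹' actIter (incidenceGraph G) thr 1 S = Sum.inr ⁻¹' S ∪ G.edgesIn (Sum.inl ⁻¹' S) := by
  ext e
  have hfin : {v | v ∈ (e : Sym2 V)}.Finite :=
    Set.finite_of_ncard_pos (by rw [G.ncard_setOf_mem_edge]; omega)
  refine or_congr_right ?_
  change thr (Sum.inr e) ≤ _ ↔ _
  rw [hthr, incidenceGraph_neighborSet_inr, ← G.ncard_setOf_mem_edge e,
    ← Set.ncard_image_of_injective _ Sum.inl_injective,
    Set.ncard_le_ncard_inter_iff (hfin.image _), Set.image_subset_iff]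
  rfl

end IncidenceGraph

theorem stmt5_general (n k : ℕ) (G : SimpleGraph (Fin n))
    (hk : 4 ≤ k) :
    (∃ K : Set (Fin n), K.ncard = k ∧ K.Pairwise G.Adj) ↔
    ∃ S : Set (Fin n ⊕ G.edgeSet), S.ncard ≤ k ∧
      k * (k - 1) / 2 ≤
        (actIter (incidenceGraph G)
            (Sum.elim (fun v => (G.neighborSet v).ncard) (fun _ => 2)) 1 S ∩
          Set.range Sum.inr).ncard := by
  have hcount (S : Set (Fin n ⊕ G.edgeSet)) :
      (actIter (incidenceGraph G) (Sum.elim (fun v => (G.neighborSet v).ncard) (fun _ => 2)) 1 S ∩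
        Set.range Sum.inr).ncard = (Sum.inr ⁻¹' S ∪ G.edgesIn (Sum.inl ⁻¹' S)).ncard := by
    rw [← Set.image_preimage_eq_inter_range, Set.ncard_image_of_injective _ Sum.inr_injective,
      preimage_inr_actIter_one (fun _ => rfl)]
  simp only [hcount, ← Nat.choose_two_right]
  constructor
  · rintro ⟨K, hK, hclique⟩
    refine ⟨Sum.inl '' K, by rw [Set.ncard_image_of_injective _ Sum.inl_injective, hK], ?_⟩
    rw [Set.preimage_image_eq _ Sum.inl_injective, ← hK,
      ← SimpleGraph.ncard_edgesIn_of_isClique hclique]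
    exact Set.ncard_le_ncard Set.subset_union_right (Set.toFinite _)
  · rintro ⟨S, hS, hact⟩
    have hsplit := (Set.ncard_preimage_inl_add_ncard_preimage_inr (Set.toFinite S)).trans_le hS
    have hact' := hact.trans (Set.ncard_union_le _ _)
    obtain ⟨hV, hE⟩ := Nat.eq_and_eq_zero_of_choose_two_le_add_choose_two hk hsplit
      (hact'.trans (Nat.add_le_add_left (SimpleGraph.ncard_edgesIn_le (Set.toFinite _)) _))
    refine ⟨Sum.inl ⁻¹' S, hV,
      SimpleGraph.isClique_of_choose_two_le_ncard_edgesIn (Set.toFinite _) ?_⟩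
    simpa only [hV, hE, zero_add] using hact'

/-- Let `G` have minimum degree at least 1 and let `k ≥ 4`. In the incidence
graph of `G` with thresholds `thr' v = deg_G v` on the vertex side and `thr' e = 2` on the
edge side, `G` contains a clique of size `k` iff there is a set `S` of at most `k` vertices
of the incidence graph whose first activation round activates at least `k(k−1)/2` edge-side
vertices. -/
theorem stmt5 (n k : ℕ) (G : SimpleGraph (Fin n))
    (hdeg : ∀ v, 1 ≤ (G.neighborSet v).ncard) (hk : 4 ≤ k) :
    (∃ K : Set (Fin n), K.ncard = k ∧ K.Pairwise G.Adj) ↔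
    ∃ S : Set (Fin n ⊕ G.edgeSet), S.ncard ≤ k ∧
      k * (k - 1) / 2 ≤
        (actIter (incidenceGraph G)
            (Sum.elim (fun v => (G.neighborSet v).ncard) (fun _ => 2)) 1 S ∩
          Set.range Sum.inr).ncard :=
  stmt5_general n k G hk
end

section
/- Let G = (V,E) be a finite simple graph with minimum degree at least 1, and let G' be the incidence graph of G with threshold function thr' given by thr'(v) = 1 for every v ∈ V and thr'(e) = 2 for every e ∈ E. Then for every S ⊆ V, act_{G'}(S) = S if and only if S is an independent set in G. -/
/-!
With thresholds 1 on vertices and 2 on edges, a vertex of `G` has only edges as neighbours in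
the incidence graph, so it is never activated by a set of vertices; an edge is activated exactly
when both of its endpoints lie in `S`. Hence `S` activates nothing new iff no edge has both
endpoints in `S`.
-/

open Set

theorem Sym2.finite_setOf_mem {α : Type*} (z : Sym2 α) : {a | a ∈ z}.Finite := by
  induction z using Sym2.ind with
  | h a b => simp only [Sym2.mem_iff, ofPred_or, ofPred_eq_eq_singleton]; exact toFinite _

theorem SimpleGraph.isIndepSet_iff_forall_edge_ncard_le_one {V : Type*} {G : SimpleGraph V}
    {S : Set V} :
    G.IsIndepSet S ↔ ∀ e ∈ G.edgeSet, {v | v ∈ S ∧ v ∈ e}.ncard ≤ 1 := by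
  constructor
  · intro hS e he
    rw [ncard_le_one ((Sym2.finite_setOf_mem e).subset fun _ h => h.2)]
    rintro u ⟨hu, hue⟩ v ⟨hv, hve⟩
    by_contra huv
    rw [(Sym2.mem_and_mem_iff huv).mp ⟨hue, hve⟩, SimpleGraph.mem_edgeSet] at he
    exact hS hu hv huv he
  · intro h u hu v hv huv hadj
    have h₁ := h s(u, v) hadj
    rw [ncard_le_one ((Sym2.finite_setOf_mem _).subset fun _ h => h.2)] at h₁
    exact huv (h₁ u ⟨hu, Sym2.mem_mk_left u v⟩ v ⟨hv, Sym2.mem_mk_right u v⟩)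

section Activation

variable {V : Type*} (G : SimpleGraph V) (thr : V → ℕ) (S : Set V)

theorem actStep_eq_self_iff :
    actStep G thr S = S ↔ ∀ v, thr v ≤ (G.neighborSet v ∩ S).ncard → v ∈ S :=
  union_eq_left

theorem actIter_eq_self_of_actStep_eq_self (h : actStep G thr S = S) (i : ℕ) :
    actIter G thr i S = S := by
  induction i with
  | zero => rfl
  | succ i ih => rw [actIter, ih, h]

theorem act_eq_self_iff_actStep_eq_self : act G thr S = S ↔ actStep G thr S = S := by
  refine ⟨fun h => subset_antisymm ?_ subset_union_left, fun h => ?_⟩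
  · calc actStep G thr S = actIter G thr 1 S := rfl
      _ ⊆ act G thr S := subset_iUnion (fun i => actIter G thr i S) 1
      _ = S := h
  · simp only [act, actIter_eq_self_of_actStep_eq_self G thr S h, iUnion_const]

end Activation

section IncidenceGraph

variable {V : Type*} {G : SimpleGraph V}

theorem incidenceGraph_adj_inl_inr {v : V} {e : G.edgeSet} :
    (incidenceGraph G).Adj (.inl v) (.inr e) ↔ v ∈ (e : Sym2 V) := by
  simp [incidenceGraph]

theorem incidenceGraph_not_adj_inl_inl {u v : V} :
    ¬ (incidenceGraph G).Adj (.inl u) (.inl v) := by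
  simp [incidenceGraph]

theorem incidenceGraph_neighborSet_inl_inter_image_inl (v : V) (S : Set V) :
    (incidenceGraph G).neighborSet (.inl v) ∩ Sum.inl '' S = ∅ := by
  refine eq_empty_iff_forall_notMem.2 ?_
  rintro _ ⟨hadj, u, -, rfl⟩
  exact incidenceGraph_not_adj_inl_inl hadj

theorem incidenceGraph_neighborSet_inr_inter_image_inl (e : G.edgeSet) (S : Set V) :
    (incidenceGraph G).neighborSet (.inr e) ∩ Sum.inl '' S =
      Sum.inl '' {v | v ∈ S ∧ v ∈ (e : Sym2 V)} := by
  ext (u | f)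
  · simp [(incidenceGraph G).adj_comm (.inr e), incidenceGraph_adj_inl_inr, and_comm]
  · simp

theorem act_incidenceGraph_image_inl_eq_self_iff (S : Set V) :
    act (incidenceGraph G) (Sum.elim (fun _ => 1) (fun _ => 2)) (Sum.inl '' S) = Sum.inl '' S ↔
      ∀ e ∈ G.edgeSet, {v | v ∈ S ∧ v ∈ e}.ncard ≤ 1 := by
  rw [act_eq_self_iff_actStep_eq_self, actStep_eq_self_iff]
  constructor
  · intro h e he
    by_contra! hlt
    have hact := h (.inr ⟨e, he⟩) <| by
      rw [incidenceGraph_neighborSet_inr_inter_image_inl,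
        ncard_image_of_injective _ Sum.inl_injective]
      exact hlt
    simp at hact
  · rintro h (v | e) hx
    · simp [incidenceGraph_neighborSet_inl_inter_image_inl] at hx
    · rw [incidenceGraph_neighborSet_inr_inter_image_inl,
        ncard_image_of_injective _ Sum.inl_injective] at hx
      have hle := h e e.2
      simp only [Sum.elim_inr] at hx
      omega

end IncidenceGraph

theorem stmt8_general (n : ℕ) (G : SimpleGraph (Fin n))
    (S : Set (Fin n)) :
    act (incidenceGraph G) (Sum.elim (fun _ => 1) (fun _ => 2)) (Sum.inl '' S) =
        Sum.inl '' S ↔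
      S.Pairwise fun u v => ¬ G.Adj u v :=
  (act_incidenceGraph_image_inl_eq_self_iff S).trans
    SimpleGraph.isIndepSet_iff_forall_edge_ncard_le_one.symm

/-- Let `G` have minimum degree at least 1 and consider its incidence graph with
thresholds `1` on the vertex side and `2` on the edge side. For every `S ⊆ V`, the set `S`
(viewed on the vertex side) activates nothing further iff `S` is an independent set of `G`. -/
theorem stmt8 (n : ℕ) (G : SimpleGraph (Fin n))
    (hdeg : ∀ v, 1 ≤ (G.neighborSet v).ncard) (S : Set (Fin n)) :
    act (incidenceGraph G) (Sum.elim (fun _ => 1) (fun _ => 2)) (Sum.inl '' S) =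
        Sum.inl '' S ↔
      S.Pairwise fun u v => ¬ G.Adj u v :=
  stmt8_general n G S
end

section
/- Let G = (V,E) be a finite simple graph with minimum degree at least 1 and unanimity thresholds, i.e. thr(v) = deg(v) for every v ∈ V. Then a set S ⊆ V is a target set for (G, thr) if and only if S is a vertex cover of G, i.e. every edge of G has at least one endpoint in S. -/
/-- In a finite graph with minimum degree at least 1 and unanimity thresholds
`thr v = deg v`, a set `S` is a target set iff it is a vertex cover. -/
theorem stmt13 {V : Type*} [Fintype V] (G : SimpleGraph V)
    (hdeg : ∀ v, 1 ≤ (G.neighborSet v).ncard) (S : Set V) :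
    IsTargetSet G (fun v => (G.neighborSet v).ncard) S ↔
      ∀ u v, G.Adj u v → u ∈ S ∨ v ∈ S := by
  have : Fintype V := ‹_›
  constructor
  · intro hT u v huv
    by_contra hc
    push_neg at hc
    obtain ⟨hu, hv⟩ := hc
    -- u and v never get activated
    have key : ∀ i, u ∉ actIter G (fun v => (G.neighborSet v).ncard) i S ∧
        v ∉ actIter G (fun v => (G.neighborSet v).ncard) i S := by
      intro i
      induction i with
      | zero => exact ⟨hu, hv⟩
      | succ i ih =>
        set A := actIter G (fun v => (G.neighborSet v).ncard) i S with hA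
        have step : ∀ w x, G.Adj w x → x ∉ A →
            (G.neighborSet w).ncard ≤ (G.neighborSet w ∩ A).ncard → False := by
          intro w x hwx hxA hle
          have hss : G.neighborSet w ∩ A ⊂ G.neighborSet w := by
            constructor
            · exact Set.inter_subset_left
            · intro hsub
              exact hxA (hsub hwx).2
          have := Set.ncard_lt_ncard hss (Set.toFinite _)
          omega
        refine ⟨?_, ?_⟩
        · rintro (h | h)
          · exact ih.1 h
          · exact step u v huv ih.2 h
        · rintro (h | h)
          · exact ih.2 h
          · exact step v u huv.symm ih.1 h
    have : u ∈ act G (fun v => (G.neighborSet v).ncard) S := by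
      rw [hT]; trivial
    obtain ⟨_, ⟨i, rfl⟩, hi⟩ := this
    exact (key i).1 hi
  · intro hcov
    have h1 : actIter G (fun v => (G.neighborSet v).ncard) 1 S = Set.univ := by
      ext w
      simp only [Set.mem_univ, iff_true]
      by_cases hw : w ∈ S
      · exact Or.inl hw
      · right
        have : G.neighborSet w ∩ S = G.neighborSet w := by
          apply Set.inter_eq_left.mpr
          intro x hx
          rcases hcov w x hx with h | h
          · exact absurd h hw
          · exact h
        simp only [Set.mem_setOf_eq]
        rw [show actIter G (fun v => (G.neighborSet v).ncard) 0 S = S from rfl] at *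
        rw [this]
    unfold IsTargetSet
    apply Set.eq_univ_of_univ_subset
    rw [← h1]
    exact Set.subset_iUnion (fun i => actIter G (fun v => (G.neighborSet v).ncard) i S) 1
end

section
/- Let G = (V,E) be a finite simple graph with minimum degree at least 1, let k and h be integers with 2 ≤ k ≤ |V| and h ≥ 2, and suppose G has no independent set of size k. Let G' be the graph with vertex set V ∪ E ∪ F where |F| = h, in which v ∈ V and e ∈ E are adjacent iff v is an endpoint of e, and every f ∈ F is adjacent to every e ∈ E; let thr'(v) = 1 for v ∈ V, thr'(e) = 2 for e ∈ E, and thr'(f) = 1 for f ∈ F. Then every set S ⊆ V ∪ E ∪ F with |S| = k satisfies act_{G'}(S) = V ∪ E ∪ F, i.e. S activates the whole graph. -/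
/-- The graph on `V ∪ E ∪ F` (with `|F| = h`): a vertex `v` is adjacent to an edge `e` iff
`v` is an endpoint of `e`, and every `f ∈ F` is adjacent to every edge `e ∈ E`. -/
def augGraph {V : Type*} (G : SimpleGraph V) (h : ℕ) :
    SimpleGraph (V ⊕ (G.edgeSet ⊕ Fin h)) :=
  SimpleGraph.fromRel fun x y =>
    (∃ (v : V) (e : G.edgeSet), x = Sum.inl v ∧ y = Sum.inr (Sum.inl e) ∧ v ∈ (e : Sym2 V)) ∨
    (∃ (e : G.edgeSet) (f : Fin h), x = Sum.inr (Sum.inl e) ∧ y = Sum.inr (Sum.inr f))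

/-- Thresholds `1` on `V`, `2` on `E`, `1` on `F`. -/
def augThr {V : Type*} (G : SimpleGraph V) (h : ℕ) : V ⊕ (G.edgeSet ⊕ Fin h) → ℕ :=
  Sum.elim (fun _ => 1) (Sum.elim (fun _ => 2) (fun _ => 1))


lemma actIter_mono {V : Type*} (G : SimpleGraph V) (thr : V → ℕ) (S : Set V)
    {i j : ℕ} (hij : i ≤ j) : actIter G thr i S ⊆ actIter G thr j S := by
  induction j with
  | zero =>
    have : i = 0 := Nat.le_zero.mp hij
    subst this; exact subset_rfl
  | succ j ih =>
    rcases Nat.lt_or_ge i (j+1) with h' | h'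
    · exact (ih (Nat.lt_succ_iff.mp h')).trans
        (show actIter G thr j S ⊆ actIter G thr (j+1) S from Set.subset_union_left)
    · have : i = j + 1 := le_antisymm hij h'
      subst this; exact subset_rfl

lemma subset_act {V : Type*} (G : SimpleGraph V) (thr : V → ℕ) (S : Set V) :
    S ⊆ act G thr S := fun x hx => Set.mem_iUnion.mpr ⟨0, hx⟩

lemma mem_act_one {V : Type*} [Finite V] (G : SimpleGraph V) (thr : V → ℕ) (S : Set V)
    {v a : V} (hthr : thr v ≤ 1) (hadj : G.Adj v a) (ha : a ∈ act G thr S) :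
    v ∈ act G thr S := by
  obtain ⟨i, hi⟩ := Set.mem_iUnion.mp ha
  refine Set.mem_iUnion.mpr ⟨i + 1, Or.inr ?_⟩
  have hsub : {a} ⊆ G.neighborSet v ∩ actIter G thr i S := by
    intro x hx; rcases hx with rfl; exact ⟨hadj, hi⟩
  calc thr v ≤ 1 := hthr
    _ = ({a} : Set V).ncard := (Set.ncard_singleton a).symm
    _ ≤ _ := Set.ncard_le_ncard hsub (Set.toFinite _)

lemma mem_act_two {V : Type*} [Finite V] (G : SimpleGraph V) (thr : V → ℕ) (S : Set V)
    {v a b : V} (hthr : thr v ≤ 2) (hab : a ≠ b) (hadja : G.Adj v a) (hadjb : G.Adj v b)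
    (ha : a ∈ act G thr S) (hb : b ∈ act G thr S) : v ∈ act G thr S := by
  obtain ⟨i, hi⟩ := Set.mem_iUnion.mp ha
  obtain ⟨j, hj⟩ := Set.mem_iUnion.mp hb
  refine Set.mem_iUnion.mpr ⟨max i j + 1, Or.inr ?_⟩
  have hsub : {a, b} ⊆ G.neighborSet v ∩ actIter G thr (max i j) S := by
    intro x hx
    rcases hx with rfl | hx
    · exact ⟨hadja, actIter_mono G thr S (le_max_left i j) hi⟩
    · rcases hx with rfl; exact ⟨hadjb, actIter_mono G thr S (le_max_right i j) hj⟩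
  calc thr v ≤ 2 := hthr
    _ = ({a, b} : Set V).ncard := (Set.ncard_pair hab).symm
    _ ≤ _ := Set.ncard_le_ncard hsub (Set.toFinite _)

lemma augGraph_adj_ve {V : Type*} (G : SimpleGraph V) (h : ℕ) (v : V) (e : G.edgeSet)
    (hv : v ∈ (e : Sym2 V)) :
    (augGraph G h).Adj (Sum.inl v) (Sum.inr (Sum.inl e)) := by
  rw [augGraph, SimpleGraph.fromRel_adj]
  exact ⟨by simp, Or.inl (Or.inl ⟨v, e, rfl, rfl, hv⟩)⟩

lemma augGraph_adj_ef {V : Type*} (G : SimpleGraph V) (h : ℕ) (e : G.edgeSet) (f : Fin h) :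
    (augGraph G h).Adj (Sum.inr (Sum.inl e)) (Sum.inr (Sum.inr f)) := by
  rw [augGraph, SimpleGraph.fromRel_adj]
  exact ⟨by simp, Or.inl (Or.inr ⟨e, f, rfl, rfl⟩)⟩

/-- Let `G` have minimum degree at least 1, let `2 ≤ k ≤ |V|` and `h ≥ 2`, and
suppose `G` has no independent set of size `k`. Then in the graph on `V ∪ E ∪ F` (with
`|F| = h`) and thresholds `1/2/1`, every set of exactly `k` vertices activates everything. -/
theorem stmt14 (n k h : ℕ) (G : SimpleGraph (Fin n))
    (hdeg : ∀ v, 1 ≤ (G.neighborSet v).ncard)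
    (hk2 : 2 ≤ k) (hkn : k ≤ n) (hh : 2 ≤ h)
    (hnoind : ¬ ∃ A : Set (Fin n), A.ncard = k ∧ A.Pairwise fun u v => ¬ G.Adj u v) :
    ∀ S : Set (Fin n ⊕ (G.edgeSet ⊕ Fin h)), S.ncard = k →
      act (augGraph G h) (augThr G h) S = Set.univ := by
  intro S hS
  have key : ∃ e : G.edgeSet, Sum.inr (Sum.inl e) ∈ act (augGraph G h) (augThr G h) S := by
    by_cases hB : ∃ e : G.edgeSet, Sum.inr (Sum.inl e) ∈ S
    · obtain ⟨e, he⟩ := hB; exact ⟨e, subset_act _ _ _ he⟩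
    by_cases hC2 : ∃ f g : Fin h, f ≠ g ∧ Sum.inr (Sum.inr f) ∈ S ∧ Sum.inr (Sum.inr g) ∈ S
    · obtain ⟨f, g, hfg, hf, hg⟩ := hC2
      have hn : 0 < n := by omega
      obtain ⟨u, hu⟩ := Set.nonempty_of_ncard_ne_zero
        (s := G.neighborSet (⟨0, hn⟩ : Fin n)) (by have := hdeg ⟨0, hn⟩; omega)
      refine ⟨⟨s((⟨0, hn⟩ : Fin n), u), G.mem_edgeSet.mpr hu⟩, ?_⟩
      exact mem_act_two _ _ _ (by norm_num [augThr])
        (by simp [hfg]) (augGraph_adj_ef G h _ f) (augGraph_adj_ef G h _ g)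
        (subset_act _ _ _ hf) (subset_act _ _ _ hg)
    by_cases hVF : ∃ (v : Fin n) (f : Fin h), Sum.inl v ∈ S ∧ Sum.inr (Sum.inr f) ∈ S
    · obtain ⟨v, f, hv, hf⟩ := hVF
      obtain ⟨u, hu⟩ := Set.nonempty_of_ncard_ne_zero
        (s := G.neighborSet v) (by have := hdeg v; omega)
      refine ⟨⟨s(v, u), G.mem_edgeSet.mpr hu⟩, ?_⟩
      exact mem_act_two _ _ _ (by norm_num [augThr])
        (by simp) ((augGraph_adj_ve G h v _ (by simp)).symm) (augGraph_adj_ef G h _ f)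
        (subset_act _ _ _ hv) (subset_act _ _ _ hf)
    · -- every element of S is a vertex
      have hall : ∀ x ∈ S, ∃ w : Fin n, x = Sum.inl w := by
        intro x hx
        match x with
        | Sum.inl w => exact ⟨w, rfl⟩
        | Sum.inr (Sum.inl e) => exact absurd ⟨e, hx⟩ hB
        | Sum.inr (Sum.inr f) =>
          exfalso
          have h1 : 1 < S.ncard := by omega
          obtain ⟨y, hyS, hyx⟩ := Set.exists_ne_of_one_lt_ncard h1 (Sum.inr (Sum.inr f))
          match y with
          | Sum.inl w => exact hVF ⟨w, f, hyS, hx⟩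
          | Sum.inr (Sum.inl e) => exact hB ⟨e, hyS⟩
          | Sum.inr (Sum.inr g) =>
            exact hC2 ⟨g, f, fun hc => hyx (by rw [hc]), hyS, hx⟩
      have hSA : S = Sum.inl '' (Sum.inl ⁻¹' S) := by
        ext x; constructor
        · intro hx; obtain ⟨w, rfl⟩ := hall x hx; exact ⟨w, hx, rfl⟩
        · rintro ⟨w, hw, rfl⟩; exact hw
      have hcard : (Sum.inl ⁻¹' S : Set (Fin n)).ncard = k := by
        rw [← Set.ncard_image_of_injective _ Sum.inl_injective, ← hSA, hS]
      have hnp : ¬ (Sum.inl ⁻¹' S : Set (Fin n)).Pairwise (fun u v => ¬ G.Adj u v) :=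
        fun hp => hnoind ⟨_, hcard, hp⟩
      rw [Set.Pairwise] at hnp
      push_neg at hnp
      obtain ⟨u, hu, w, hw, huw, hadj⟩ := hnp
      refine ⟨⟨s(u, w), G.mem_edgeSet.mpr hadj⟩, ?_⟩
      exact mem_act_two _ _ _ (by norm_num [augThr])
        (by simp [huw]) ((augGraph_adj_ve G h u _ (by simp)).symm)
        ((augGraph_adj_ve G h w _ (by simp)).symm)
        (subset_act _ _ _ hu) (subset_act _ _ _ hw)
  obtain ⟨e0, he0⟩ := key
  have hF : ∀ f : Fin h, Sum.inr (Sum.inr f) ∈ act (augGraph G h) (augThr G h) S := fun f =>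
    mem_act_one _ _ _ (by norm_num [augThr]) (augGraph_adj_ef G h e0 f).symm he0
  have hE : ∀ e : G.edgeSet, Sum.inr (Sum.inl e) ∈ act (augGraph G h) (augThr G h) S := by
    intro e
    have h01 : ((⟨0, by omega⟩ : Fin h)) ≠ ⟨1, by omega⟩ := by simp [Fin.ext_iff]
    exact mem_act_two _ _ _ (by norm_num [augThr])
      (by simp [Fin.ext_iff]) (augGraph_adj_ef G h e ⟨0, by omega⟩)
      (augGraph_adj_ef G h e ⟨1, by omega⟩) (hF _) (hF _)
  have hV : ∀ v : Fin n, Sum.inl v ∈ act (augGraph G h) (augThr G h) S := by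
    intro v
    obtain ⟨u, hu⟩ := Set.nonempty_of_ncard_ne_zero
      (s := G.neighborSet v) (by have := hdeg v; omega)
    exact mem_act_one _ _ _ (by norm_num [augThr])
      (augGraph_adj_ve G h v ⟨s(v, u), G.mem_edgeSet.mpr hu⟩ (by simp)) (hE _)
  ext x
  simp only [Set.mem_univ, iff_true]
  match x with
  | Sum.inl v => exact hV v
  | Sum.inr (Sum.inl e) => exact hE e
  | Sum.inr (Sum.inr f) => exact hF f
end

section
/- Let G = (V,E) be a finite simple graph with minimum degree at least 1 and let h ≥ 1 be an integer. Let G' be the graph with vertex set V ∪ E ∪ F where |F| = h, in which v ∈ V and e ∈ E are adjacent iff v is an endpoint of e, and every f ∈ F is adjacent to every e ∈ E; let thr'(v) = 1 for v ∈ V, thr'(e) = 2 for e ∈ E, and thr'(f) = 1 for f ∈ F. Then for every independent set A ⊆ V of G we have act_{G'}(A) = A. -/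
/-- Let `G` have minimum degree at least 1 and let `h ≥ 1`. Then in the graph on
`V ∪ E ∪ F` (with `|F| = h`) and thresholds `1/2/1`, every independent set `A ⊆ V` of `G`
activates nothing further. -/
theorem stmt15 (n h : ℕ) (G : SimpleGraph (Fin n))
    (hdeg : ∀ v, 1 ≤ (G.neighborSet v).ncard) (hh : 1 ≤ h)
    (A : Set (Fin n)) (hA : A.Pairwise fun u v => ¬ G.Adj u v) :
    act (augGraph G h) (augThr G h) (Sum.inl '' A) = Sum.inl '' A := by
  set S : Set (Fin n ⊕ (G.edgeSet ⊕ Fin h)) := Sum.inl '' A with hS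
  have key : actStep (augGraph G h) (augThr G h) S = S := by
    apply Set.union_eq_self_of_subset_right
    rintro (v | e | f) hw
    · exfalso
      simp only [Set.mem_setOf_eq, augThr, Sum.elim_inl] at hw
      have hempty : (augGraph G h).neighborSet (Sum.inl v) ∩ S = ∅ := by
        ext x
        simp only [Set.mem_inter_iff, Set.mem_empty_iff_false, iff_false, not_and]
        rintro hadj ⟨u, _, rfl⟩
        simp only [augGraph, SimpleGraph.fromRel_adj, SimpleGraph.mem_neighborSet] at hadj
        rcases hadj.2 with (⟨v', e', h1, h2, h3⟩ | ⟨e', f', h1, h2⟩) |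
          (⟨v', e', h1, h2, h3⟩ | ⟨e', f', h1, h2⟩)
        · simp at h2
        · simp at h1
        · simp at h2
        · simp at h1
      rw [hempty] at hw
      simp at hw
    · exfalso
      simp only [Set.mem_setOf_eq, augThr, Sum.elim_inr, Sum.elim_inl] at hw
      obtain ⟨es, he⟩ := e
      have hsub : ∀ x ∈ (augGraph G h).neighborSet (Sum.inr (Sum.inl ⟨es, he⟩)) ∩ S,
          ∃ u, x = Sum.inl u ∧ u ∈ A ∧ u ∈ es := by
        rintro x ⟨hadj, u, hu, rfl⟩
        refine ⟨u, rfl, hu, ?_⟩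
        simp only [augGraph, SimpleGraph.fromRel_adj, SimpleGraph.mem_neighborSet] at hadj
        rcases hadj.2 with (⟨v', e', h1, h2, h3⟩ | ⟨e', f', h1, h2⟩) |
          (⟨v', e', h1, h2, h3⟩ | ⟨e', f', h1, h2⟩)
        · simp at h1
        · simp at h2
        · rw [Sum.inl.injEq] at h1
          rw [Sum.inr.injEq, Sum.inl.injEq] at h2
          subst h1
          rw [← h2] at h3
          exact h3
        · simp at h1
      have key2 : ∀ c : Fin n,
          (augGraph G h).neighborSet (Sum.inr (Sum.inl ⟨es, he⟩)) ∩ S ⊆ {Sum.inl c} → False := by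
        intro c hc
        have := Set.ncard_le_ncard hc (Set.finite_singleton _)
        rw [Set.ncard_singleton] at this
        omega
      induction es using Sym2.ind with
      | _ a b =>
        rw [SimpleGraph.mem_edgeSet] at he
        have hab : ¬ (a ∈ A ∧ b ∈ A) := by
          rintro ⟨ha, hb⟩
          exact hA ha hb he.ne he
        by_cases haA : a ∈ A
        · refine key2 a ?_
          intro x hx
          obtain ⟨u, rfl, huA, hue⟩ := hsub x hx
          rw [Sym2.mem_iff] at hue
          rcases hue with rfl | rfl
          · rfl
          · exact absurd ⟨haA, huA⟩ hab
        · refine key2 b ?_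
          intro x hx
          obtain ⟨u, rfl, huA, hue⟩ := hsub x hx
          rw [Sym2.mem_iff] at hue
          rcases hue with rfl | rfl
          · exact absurd huA haA
          · rfl
    · exfalso
      simp only [Set.mem_setOf_eq, augThr, Sum.elim_inr] at hw
      have hempty : (augGraph G h).neighborSet (Sum.inr (Sum.inr f)) ∩ S = ∅ := by
        ext x
        simp only [Set.mem_inter_iff, Set.mem_empty_iff_false, iff_false, not_and]
        rintro hadj ⟨u, _, rfl⟩
        simp only [augGraph, SimpleGraph.fromRel_adj, SimpleGraph.mem_neighborSet] at hadj
        rcases hadj.2 with (⟨v', e', h1, h2, h3⟩ | ⟨e', f', h1, h2⟩) |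
          (⟨v', e', h1, h2, h3⟩ | ⟨e', f', h1, h2⟩)
        · simp at h1
        · simp at h2
        · simp at h2
        · simp at h1
      rw [hempty] at hw
      simp at hw
  have hiter : ∀ i, actIter (augGraph G h) (augThr G h) i S = S := by
    intro i
    induction i with
    | zero => rfl
    | succ i ih => rw [actIter, ih, key]
  simp only [act, hiter, Set.iUnion_const]
end

section
/- Let D be the directed edge gadget graph on the six vertices {u, a, b, c, d, v} with edges {u,a}, {a,b}, {b,c}, {c,d}, {d,a}, {c,v}, and threshold function thr(u) = thr(a) = thr(b) = thr(d) = thr(v) = 1 and thr(c) = 2. Then act_D({u}) = {u, a, b, c, d, v} (activating u eventually activates every vertex, in particular v), while act_D({v}) = {v} (activating v activates no further vertex). -/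
/-- The directed edge gadget graph on vertices `u = 0, a = 1, b = 2, c = 3, d = 4, v = 5`
with edges {u,a}, {a,b}, {b,c}, {c,d}, {d,a}, {c,v}. -/
def gadgetGraph : SimpleGraph (Fin 6) :=
  SimpleGraph.fromRel fun x y =>
    (x = 0 ∧ y = 1) ∨ (x = 1 ∧ y = 2) ∨ (x = 2 ∧ y = 3) ∨
    (x = 3 ∧ y = 4) ∨ (x = 4 ∧ y = 1) ∨ (x = 3 ∧ y = 5)

/-- Thresholds of the gadget: `thr c = 2` and every other vertex has threshold `1`. -/
def gadgetThr : Fin 6 → ℕ := fun x => if x = 3 then 2 else 1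

instance : DecidableRel gadgetGraph.Adj := fun x y =>
  decidable_of_iff _ (SimpleGraph.fromRel_adj _ x y).symm

def stepF (S : Finset (Fin 6)) : Finset (Fin 6) :=
  S ∪ Finset.univ.filter fun v =>
    gadgetThr v ≤ (Finset.univ.filter fun w => gadgetGraph.Adj v w ∧ w ∈ S).card

lemma actStep_finset (S : Finset (Fin 6)) :
    actStep gadgetGraph gadgetThr ↑S = ↑(stepF S) := by
  have h : ∀ v : Fin 6, gadgetGraph.neighborSet v ∩ ↑S =
      ↑(Finset.univ.filter fun w => gadgetGraph.Adj v w ∧ w ∈ S) := by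
    intro v; ext w; simp [SimpleGraph.neighborSet]
  unfold actStep
  have h2 : {v | gadgetThr v ≤ (gadgetGraph.neighborSet v ∩ ↑S).ncard} =
      ↑(Finset.univ.filter fun v =>
        gadgetThr v ≤ (Finset.univ.filter fun w => gadgetGraph.Adj v w ∧ w ∈ S).card) := by
    ext v
    rw [Set.mem_setOf_eq, h v, Set.ncard_coe_finset]
    simp
  rw [h2]
  simp [stepF]

lemma iter4 : actIter gadgetGraph gadgetThr 4 {0} = Set.univ := by
  have h0 : ({0} : Set (Fin 6)) = ↑({0} : Finset (Fin 6)) := by simp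
  show actStep _ _ (actStep _ _ (actStep _ _ (actStep _ _ {0}))) = _
  rw [h0, actStep_finset, actStep_finset, actStep_finset, actStep_finset]
  have : stepF (stepF (stepF (stepF {0}))) = Finset.univ := by decide
  rw [this]; simp

lemma iter5 : ∀ i, actIter gadgetGraph gadgetThr i {5} = {5} := by
  intro i
  induction i with
  | zero => rfl
  | succ n ih =>
    show actStep _ _ (actIter gadgetGraph gadgetThr n {5}) = {5}
    rw [ih]
    have h0 : ({5} : Set (Fin 6)) = ↑({5} : Finset (Fin 6)) := by simp
    rw [h0, actStep_finset]
    have : stepF {5} = {5} := by decide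
    rw [this]

/-- In the directed edge gadget, activating `u` eventually activates every
vertex (in particular `v`), while activating `v` activates no further vertex. -/
theorem stmt17 :
    act gadgetGraph gadgetThr {0} = Set.univ ∧ act gadgetGraph gadgetThr {5} = {5} := by
  constructor
  · apply Set.eq_univ_of_univ_subset
    rw [← iter4]
    exact Set.subset_iUnion (actIter gadgetGraph gadgetThr · {0}) 4
  · unfold act
    simp [iter5]
end
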